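/- The disjoint union of three copies of K_4 has no spanning subgraph with exactly three vertices of each of the degrees 0, 1, 2, 3. -/

import Mathlib

open SimpleGraph

/-- The degree of `v` in `H`, as the cardinality of its neighbor set. -/
noncomputable def nDeg {V : Type*} (H : SimpleGraph V) (v : V) : ℕ :=
  (H.neighborSet v).ncard

/-- The number of vertices of degree `k` in `H`. -/
noncomputable def degCount {V : Type*} (H : SimpleGraph V) (k : ℕ) : ℕ :=
  {v | nDeg H v = k}.ncard

def K4 : SimpleGraph (Fin 4) := completeGraph (Fin 4)

def K33 : SimpleGraph (Fin 3 ⊕ Fin 3) := completeBipartiteGraph (Fin 3) (Fin 3)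

/-- The disjoint union of `m` copies of `K₄`. -/
def unionK4 (m : ℕ) : SimpleGraph (Fin m × Fin 4) :=
  SimpleGraph.fromRel (fun p q => p.1 = q.1)

/-!
A degree-3 vertex of a spanning subgraph `H` of `3K₄` is adjacent to the rest of its copy of `K₄`,
so no isolated vertex lies in its copy. If the three degree-3 vertices lay in one copy, the fourth
vertex of that copy would be adjacent to all of them and have degree 3 as well; if the three
isolated vertices lay in one copy, the fourth vertex would have no possible neighbour and be
isolated too. Hence both the degree-3 and the degree-0 vertices meet at least two copies, and these
are disjoint sets of copies: four copies, but there are only three.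
-/

variable {m : ℕ}

lemma unionK4_adj {p q : Fin m × Fin 4} : (unionK4 m).Adj p q ↔ p ≠ q ∧ p.1 = q.1 := by
  simp only [unionK4, fromRel_adj, eq_comm (a := q.1), or_self]

lemma neighborSet_unionK4 (v : Fin m × Fin 4) :
    (unionK4 m).neighborSet v = Prod.mk v.1 '' {v.2}ᶜ := by
  ext q
  simp only [mem_neighborSet, unionK4_adj, Set.mem_image, Set.mem_compl_singleton_iff]
  constructor
  · rintro ⟨hne, hfst⟩
    exact ⟨q.2, fun h => hne (Prod.ext hfst h.symm), by rw [hfst]⟩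
  · rintro ⟨d, hd, rfl⟩
    exact ⟨fun h => hd (congrArg Prod.snd h).symm, rfl⟩

lemma ncard_neighborSet_unionK4 (v : Fin m × Fin 4) : ((unionK4 m).neighborSet v).ncard = 3 := by
  rw [neighborSet_unionK4, Set.ncard_image_of_injective _ (Prod.mk_right_injective v.1),
    Set.ncard_compl, Set.ncard_singleton, Nat.card_eq_fintype_card, Fintype.card_fin]

lemma nDeg_eq_zero_iff {V : Type*} [Finite V] {H : SimpleGraph V} {v : V} :
    nDeg H v = 0 ↔ ∀ q, ¬ H.Adj v q := by
  rw [nDeg, Set.ncard_eq_zero, Set.eq_empty_iff_forall_notMem]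
  rfl

variable {H : SimpleGraph (Fin m × Fin 4)}

lemma nDeg_eq_three_iff (hH : H ≤ unionK4 m) {v : Fin m × Fin 4} :
    nDeg H v = 3 ↔ ∀ q, q.1 = v.1 → q ≠ v → H.Adj v q := by
  have hsub := neighborSet_mono hH v
  calc nDeg H v = 3 ↔ H.neighborSet v = (unionK4 m).neighborSet v := by
        refine ⟨fun h => Set.eq_of_subset_of_ncard_le hsub ?_, fun h => ?_⟩
        · rw [ncard_neighborSet_unionK4, ← h, nDeg]
        · rw [nDeg, h, ncard_neighborSet_unionK4]
    _ ↔ (unionK4 m).neighborSet v ⊆ H.neighborSet v := ⟨fun h => h.ge, hsub.antisymm⟩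
    _ ↔ ∀ q, q.1 = v.1 → q ≠ v → H.Adj v q := by
        simp only [Set.subset_def, mem_neighborSet, unionK4_adj]
        exact ⟨fun h q hq hqv => h q ⟨hqv.symm, hq.symm⟩, fun h q hq => h q hq.2.symm hq.1.symm⟩

lemma fst_ne_of_nDeg_eq_three_of_nDeg_eq_zero (hH : H ≤ unionK4 m) {p q : Fin m × Fin 4}
    (hp : nDeg H p = 3) (hq : nDeg H q = 0) : p.1 ≠ q.1 := by
  intro hpq
  have hne : q ≠ p := by rintro rfl; omega
  exact nDeg_eq_zero_iff.mp hq p ((nDeg_eq_three_iff hH).mp hp q hpq.symm hne).symm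

lemma Fin.eq_or_eq_or_eq_of_four : ∀ a b c w q : Fin 4, a ≠ b → a ≠ c → b ≠ c →
    w ≠ a → w ≠ b → w ≠ c → q ≠ w → q = a ∨ q = b ∨ q = c := by
  decide

lemma Fin.exists_ne_of_four : ∀ a b c : Fin 4, ∃ d, d ≠ a ∧ d ≠ b ∧ d ≠ c := by
  decide

lemma eq_or_eq_or_eq_of_fst_eq {a b c w q : Fin m × Fin 4} (hab : a ≠ b) (hac : a ≠ c)
    (hbc : b ≠ c) (hb : b.1 = a.1) (hc : c.1 = a.1) (hw : w.1 = a.1) (hwa : w ≠ a) (hwb : w ≠ b)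
    (hwc : w ≠ c) (hq : q.1 = a.1) (hqw : q ≠ w) : q = a ∨ q = b ∨ q = c := by
  have snd_ne {x y : Fin m × Fin 4} (hx : x.1 = a.1) (hy : y.1 = a.1) (h : x ≠ y) : x.2 ≠ y.2 :=
    fun h2 => h (Prod.ext (hx.trans hy.symm) h2)
  have := Fin.eq_or_eq_or_eq_of_four a.2 b.2 c.2 w.2 q.2 (snd_ne rfl hb hab) (snd_ne rfl hc hac)
    (snd_ne hb hc hbc) (snd_ne hw rfl hwa) (snd_ne hw hb hwb) (snd_ne hw hc hwc) (snd_ne hq hw hqw)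
  rcases this with h | h | h
  · exact Or.inl (Prod.ext hq h)
  · exact Or.inr (Or.inl (Prod.ext (hq.trans hb.symm) h))
  · exact Or.inr (Or.inr (Prod.ext (hq.trans hc.symm) h))

def CompletesCopies (S : Set (Fin m × Fin 4)) : Prop :=
  ∀ a ∈ S, ∀ b ∈ S, ∀ c ∈ S, a ≠ b → a ≠ c → b ≠ c → b.1 = a.1 → c.1 = a.1 →
    ∀ w : Fin m × Fin 4, w.1 = a.1 → w ∈ S

lemma completesCopies_nDeg_eq_three (hH : H ≤ unionK4 m) :
    CompletesCopies {v | nDeg H v = 3} := by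
  intro a ha b hb c hc hab hac hbc hba hca w hw
  by_cases hw' : w = a ∨ w = b ∨ w = c
  · rcases hw' with rfl | rfl | rfl <;> assumption
  obtain ⟨hwa, hwb, hwc⟩ : w ≠ a ∧ w ≠ b ∧ w ≠ c := by simpa only [not_or] using hw'
  refine (nDeg_eq_three_iff hH).mpr fun q hq hqw => ?_
  have hq' := eq_or_eq_or_eq_of_fst_eq hab hac hbc hba hca hw hwa hwb hwc (hq.trans hw) hqw
  have adj_w {u : Fin m × Fin 4} (hu : nDeg H u = 3) (hu1 : u.1 = a.1) (huw : u ≠ w) : H.Adj w u :=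
    ((nDeg_eq_three_iff hH).mp hu w (hw.trans hu1.symm) huw.symm).symm
  rcases hq' with rfl | rfl | rfl
  exacts [adj_w ha rfl hqw, adj_w hb hba hqw, adj_w hc hca hqw]

lemma completesCopies_nDeg_eq_zero (hH : H ≤ unionK4 m) :
    CompletesCopies {v | nDeg H v = 0} := by
  intro a ha b hb c hc hab hac hbc hba hca w hw
  by_cases hw' : w = a ∨ w = b ∨ w = c
  · rcases hw' with rfl | rfl | rfl <;> assumption
  obtain ⟨hwa, hwb, hwc⟩ : w ≠ a ∧ w ≠ b ∧ w ≠ c := by simpa only [not_or] using hw'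
  refine nDeg_eq_zero_iff.mpr fun q hwq => ?_
  have hq : q.1 = a.1 := ((unionK4_adj.mp (hH hwq)).2.symm).trans hw
  rcases eq_or_eq_or_eq_of_fst_eq hab hac hbc hba hca hw hwa hwb hwc hq hwq.ne'
    with rfl | rfl | rfl
  exacts [nDeg_eq_zero_iff.mp ha w hwq.symm, nDeg_eq_zero_iff.mp hb w hwq.symm,
    nDeg_eq_zero_iff.mp hc w hwq.symm]

lemma two_le_ncard_image_fst {S : Set (Fin m × Fin 4)} (hS : S.ncard = 3)
    (hcomp : CompletesCopies S) : 2 ≤ (Prod.fst '' S).ncard := by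
  by_contra! hlt
  have hfst := (Set.ncard_le_one (Set.toFinite _)).mp (Nat.le_of_lt_succ hlt)
  obtain ⟨a, b, c, hab, hac, hbc, rfl⟩ := Set.ncard_eq_three.mp hS
  have same {u : Fin m × Fin 4} (hu : u ∈ ({a, b, c} : Set _)) : u.1 = a.1 :=
    hfst _ ⟨u, hu, rfl⟩ _ ⟨a, by simp, rfl⟩
  obtain ⟨d, hda, hdb, hdc⟩ := Fin.exists_ne_of_four a.2 b.2 c.2
  have hw := hcomp a (by simp) b (by simp) c (by simp) hab hac hbc (same (by simp))
    (same (by simp)) (a.1, d) rfl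
  rcases hw with h | h | h
  exacts [hda (congrArg Prod.snd h), hdb (congrArg Prod.snd h), hdc (congrArg Prod.snd h)]

theorem stmt14 :
    ¬ ∃ H ≤ unionK4 3, degCount H 0 = 3 ∧ degCount H 1 = 3 ∧
      degCount H 2 = 3 ∧ degCount H 3 = 3 := by
  rintro ⟨H, hH, h0, -, -, h3⟩
  have hdisj : Disjoint (Prod.fst '' {v | nDeg H v = 3}) (Prod.fst '' {v | nDeg H v = 0}) := by
    rw [Set.disjoint_left]
    rintro _ ⟨p, hp, rfl⟩ ⟨q, hq, hqp⟩
    exact fst_ne_of_nDeg_eq_three_of_nDeg_eq_zero hH hp hq hqp.symm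
  have hunion := Set.ncard_union_eq hdisj
  have h3copies := two_le_ncard_image_fst h3 (completesCopies_nDeg_eq_three hH)
  have h0copies := two_le_ncard_image_fst h0 (completesCopies_nDeg_eq_zero hH)
  have hle := Set.ncard_le_card (Prod.fst '' {v | nDeg H v = 3} ∪ Prod.fst '' {v | nDeg H v = 0})
  rw [Nat.card_eq_fintype_card, Fintype.card_fin] at hle
  omega
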